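/- Let ω ⋐ ω₁ be bounded open subsets of ℝ^N, 0 < s < 1, 1 < p < ∞, and let u ∈ L^p(ℝ^N) vanish outside a bounded set Ω ⊇ ω₁. Let η ∈ C_c^∞(ω) with 0 ≤ η ≤ 1. Define 𝕀₂(x) := C_{N,s} η(x) ∫_{ℝ^N \ ω₁} (u(x) - u(y))/|x-y|^{N+2s} dy. Then 𝕀₂ ∈ L^p(ℝ^N) with ‖𝕀₂‖_{L^p(ℝ^N)} ≤ C ‖u‖_{L^p(Ω)} for a constant C depending only on N, s, p, ω, ω₁, Ω. -/

import Mathlib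

open MeasureTheory Set

/-- The normalization constant `C_{N,s}` of the fractional Laplacian. -/
noncomputable def fracLapConst (N : ℕ) (s : ℝ) : ℝ :=
  s * 2 ^ (2 * s) * Real.Gamma ((2 * s + N) / 2) /
    (Real.pi ^ ((N : ℝ) / 2) * Real.Gamma (1 - s))

/-- The nonsingular part `𝕀₂` of the remainder term. -/
noncomputable def Itwo (N : ℕ) (s : ℝ) (ω₁ : Set (EuclideanSpace ℝ (Fin N)))
    (u η : EuclideanSpace ℝ (Fin N) → ℝ) (x : EuclideanSpace ℝ (Fin N)) : ℝ :=
  fracLapConst N s * η x *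
    ∫ y in (ω₁)ᶜ, (u x - u y) / dist x y ^ ((N : ℝ) + 2 * s)

set_option maxHeartbeats 1000000 in
/-- `𝕀₂ ∈ L^p(ℝ^N)` with `‖𝕀₂‖_{L^p(ℝ^N)} ≤ C ‖u‖_{L^p(Ω)}`. -/
theorem stmt12 (N : ℕ) (s p : ℝ) (hs : 0 < s) (hs1 : s < 1) (hp : 1 < p)
    (Ω ω ω₁ : Set (EuclideanSpace ℝ (Fin N)))
    (hΩb : Bornology.IsBounded Ω)
    (hωo : IsOpen ω) (hω₁o : IsOpen ω₁)
    (hωb : Bornology.IsBounded ω) (hω₁b : Bornology.IsBounded ω₁)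
    (hsub : closure ω ⊆ ω₁) (hsub₁ : ω₁ ⊆ Ω)
    (u : EuclideanSpace ℝ (Fin N) → ℝ)
    (huLp : MemLp u (ENNReal.ofReal p) volume)
    (hu0 : ∀ x, x ∉ Ω → u x = 0)
    (η : EuclideanSpace ℝ (Fin N) → ℝ)
    (hηsm : ContDiff ℝ (⊤ : ℕ∞) η) (hηsupp : tsupport η ⊆ ω)
    (hη01 : ∀ x, η x ∈ Icc (0 : ℝ) 1) :
    MemLp (Itwo N s ω₁ u η) (ENNReal.ofReal p) volume ∧
      ∃ C > 0, eLpNorm (Itwo N s ω₁ u η) (ENNReal.ofReal p) volume ≤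
        ENNReal.ofReal C * eLpNorm u (ENNReal.ofReal p) (volume.restrict Ω) := by
  classical
  set r : ℝ := (N : ℝ) + 2 * s with hrdef
  have hr0 : 0 < r := by positivity
  have hrN : (Module.finrank ℝ (EuclideanSpace ℝ (Fin N)) : ℝ) < r := by
    rw [show Module.finrank ℝ (EuclideanSpace ℝ (Fin N)) = N from finrank_euclideanSpace_fin]
    simp only [hrdef]; linarith
  set q : ENNReal := ENNReal.ofReal p with hq
  have hq1 : 1 ≤ q := by
    rw [hq, ← ENNReal.ofReal_one]
    exact ENNReal.ofReal_le_ofReal hp.le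
  have hq0 : q ≠ 0 := by positivity
  have hqt : q ≠ ⊤ := ENNReal.ofReal_ne_top
  have hqtoReal : q.toReal = p := ENNReal.toReal_ofReal (by linarith)
  -- compact support set K and the distance δ to the complement of ω₁
  set K := tsupport η with hKdef
  have hKcl : IsClosed K := isClosed_tsupport η
  have hKsub : K ⊆ ω₁ := fun x hx => hsub (subset_closure (hηsupp hx))
  have hKb : Bornology.IsBounded K := hωb.subset hηsupp
  have hKcomp : IsCompact K := Metric.isCompact_of_isClosed_isBounded hKcl hKb
  obtain ⟨δ, hδ0, hδ⟩ := hKcomp.exists_thickening_subset_open hω₁o hKsub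
  have hdistδ : ∀ x ∈ K, ∀ y ∈ ω₁ᶜ, δ ≤ dist x y := by
    intro x hx y hy
    by_contra h
    exact hy (hδ (Metric.mem_thickening_iff.mpr ⟨x, hx, by rw [dist_comm]; linarith⟩))
  -- radius R and the constant ε with dist x y ≥ ε (1 + ‖y‖)
  obtain ⟨R₀, hR₀⟩ := hKb.subset_closedBall 0
  set R := max R₀ 0 with hRdef
  have hKR : K ⊆ Metric.closedBall 0 R :=
    hR₀.trans (Metric.closedBall_subset_closedBall (le_max_left _ _))
  have hR0 : (0 : ℝ) ≤ R := le_max_right _ _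
  set ε := min (δ / (2 + 2 * R + δ)) (1 / 2 : ℝ) with hεdef
  have hε0 : 0 < ε := lt_min (by positivity) one_half_pos
  have hεdist : ∀ x ∈ K, ∀ y ∈ ω₁ᶜ, ε * (1 + ‖y‖) ≤ dist x y := by
    intro x hx y hy
    have hd := hdistδ x hx y hy
    have hx' : ‖x‖ ≤ R := by simpa using hKR hx
    rcases le_or_gt (‖y‖) (2 * R + δ + 1) with h | h
    · have h1 : ε ≤ δ / (2 + 2 * R + δ) := min_le_left _ _
      have h2 : (1 + ‖y‖) ≤ 2 + 2 * R + δ := by linarith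
      have h3 : ε * (1 + ‖y‖) ≤ δ / (2 + 2 * R + δ) * (2 + 2 * R + δ) :=
        mul_le_mul h1 h2 (by positivity) (by positivity)
      have h4 : δ / (2 + 2 * R + δ) * (2 + 2 * R + δ) = δ :=
        div_mul_cancel₀ _ (by positivity)
      linarith
    · have h1 : ε ≤ 1 / 2 := min_le_right _ _
      have h2 : ‖y‖ - ‖x‖ ≤ dist x y := by
        have := abs_norm_sub_norm_le y x
        have hxy : dist x y = ‖y - x‖ := by rw [dist_comm, dist_eq_norm]
        rw [hxy]
        calc ‖y‖ - ‖x‖ ≤ |‖y‖ - ‖x‖| := le_abs_self _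
          _ ≤ ‖y - x‖ := this
      have h3 : ε * (1 + ‖y‖) ≤ (1 / 2) * (1 + ‖y‖) :=
        mul_le_mul_of_nonneg_right h1 (by positivity)
      nlinarith
  -- measurable representative of u, vanishing outside Ω'
  have hum := huLp.1
  set Ω' := toMeasurable volume Ω with hΩ'def
  have hΩ'm : MeasurableSet Ω' := measurableSet_toMeasurable _ _
  have hΩΩ' : Ω ⊆ Ω' := subset_toMeasurable _ _
  have hΩvol : volume Ω' < ⊤ := by
    rw [hΩ'def, measure_toMeasurable]; exact hΩb.measure_lt_top
  set v : EuclideanSpace ℝ (Fin N) → ℝ := Ω'.indicator (hum.mk u) with hvdef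
  have hvm : StronglyMeasurable v := hum.stronglyMeasurable_mk.indicator hΩ'm
  have huv : u =ᵐ[volume] v := by
    filter_upwards [hum.ae_eq_mk] with x hx
    by_cases hxΩ : x ∈ Ω'
    · rw [hvdef]; simp only [indicator_of_mem hxΩ]; exact hx
    · rw [hvdef]; simp only [indicator_of_notMem hxΩ]
      exact hu0 x (fun h => hxΩ (hΩΩ' h))
  have hv0 : ∀ x, x ∉ Ω' → v x = 0 := fun x hx => indicator_of_notMem hx _
  -- the restricted measure and the function J
  have hω₁cm : MeasurableSet (ω₁ᶜ) := hω₁o.measurableSet.compl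
  set ν := volume.restrict (ω₁ᶜ) with hνdef
  set J : EuclideanSpace ℝ (Fin N) → ℝ := fun x => fracLapConst N s * η x * ∫ y, (v x - v y) / dist x y ^ r ∂ν
    with hJdef
  have hIJ : Itwo N s ω₁ u η =ᵐ[volume] J := by
    filter_upwards [huv] with x hx
    show fracLapConst N s * η x * ∫ y in (ω₁)ᶜ, (u x - u y) / dist x y ^ ((N : ℝ) + 2 * s)
      = fracLapConst N s * η x * ∫ y, (v x - v y) / dist x y ^ r ∂ν
    congr 1
    rw [hx]
    exact integral_congr_ae (by filter_upwards [ae_restrict_of_ae huv] with y hy; rw [hy])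
  -- measurability of J
  have hvmeas : Measurable v := hvm.measurable
  have hJm : AEStronglyMeasurable J volume := by
    have hFm : StronglyMeasurable (fun z : EuclideanSpace ℝ (Fin N) × EuclideanSpace ℝ (Fin N) => (v z.1 - v z.2) / dist z.1 z.2 ^ r) := by
      apply Measurable.stronglyMeasurable
      exact ((hvmeas.comp measurable_fst).sub (hvmeas.comp measurable_snd)).div
        (measurable_dist.pow_const r)
    have h1 : StronglyMeasurable fun x => ∫ y, (v x - v y) / dist x y ^ r ∂ν :=
      hFm.integral_prod_right'
    exact ((stronglyMeasurable_const.mul hηsm.continuous.stronglyMeasurable).mul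
      h1).aestronglyMeasurable
  -- integrability facts
  have hone : Integrable (fun y : EuclideanSpace ℝ (Fin N) => (1 + ‖y‖) ^ (-r)) volume := integrable_one_add_norm hrN
  have hone' : Integrable (fun y : EuclideanSpace ℝ (Fin N) => (1 + ‖y‖) ^ (-r)) ν := hone.restrict
  have hνfin : IsFiniteMeasure (volume.restrict Ω') :=
    ⟨by rw [Measure.restrict_apply_univ]; exact hΩvol⟩
  have hvΩ'int : Integrable v (volume.restrict Ω') :=
    (((huLp.ae_eq huv).restrict Ω')).integrable hq1
  have hvint : Integrable (Ω'.indicator (fun z => ‖v z‖)) volume :=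
    IntegrableOn.integrable_indicator (hvΩ'int.norm) hΩ'm
  have hvintν : Integrable (Ω'.indicator (fun z => ‖v z‖)) ν := hvint.restrict
  -- the constants
  set A₁ : ℝ := ∫ y, (1 + ‖y‖) ^ (-r) ∂ν with hA₁def
  have hA₁0 : 0 ≤ A₁ := integral_nonneg fun y => Real.rpow_nonneg (by positivity) _
  set I₀ : ℝ := ∫ z in Ω', ‖v z‖ with hI₀def
  have hI₀0 : 0 ≤ I₀ := integral_nonneg fun z => norm_nonneg _
  set C₀ := |fracLapConst N s| with hC₀def
  have hC₀0 : 0 ≤ C₀ := abs_nonneg _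
  set M₁ := C₀ * (ε ^ (-r) * A₁) with hM₁def
  set M₂ := C₀ * (δ ^ (-r) * I₀) with hM₂def
  have hM₁0 : 0 ≤ M₁ := by
    apply mul_nonneg hC₀0 (mul_nonneg (Real.rpow_nonneg hε0.le _) hA₁0)
  have hM₂0 : 0 ≤ M₂ := by
    apply mul_nonneg hC₀0 (mul_nonneg (Real.rpow_nonneg hδ0.le _) hI₀0)
  set g : EuclideanSpace ℝ (Fin N) → ℝ := fun x => M₁ * ‖v x‖ + K.indicator (fun _ => M₂) x with hgdef
  -- the pointwise bound
  have hbound : ∀ x, ‖J x‖ ≤ g x := by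
    intro x
    by_cases hx : x ∈ K
    · have hη1 : η x ≤ 1 := (hη01 x).2
      have hη0 : 0 ≤ η x := (hη01 x).1
      have key : ‖∫ y, (v x - v y) / dist x y ^ r ∂ν‖
          ≤ ‖v x‖ * (ε ^ (-r) * A₁) + δ ^ (-r) * I₀ := by
        refine le_trans (norm_integral_le_integral_norm _) ?_
        have hmono : ∀ᵐ y ∂ν, ‖(v x - v y) / dist x y ^ r‖
            ≤ ‖v x‖ * (ε ^ (-r) * (1 + ‖y‖) ^ (-r))
              + δ ^ (-r) * Ω'.indicator (fun z => ‖v z‖) y := by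
          filter_upwards [ae_restrict_mem hω₁cm] with y hy
          have hd1 : ε * (1 + ‖y‖) ≤ dist x y := hεdist x hx y hy
          have hdδ : δ ≤ dist x y := hdistδ x hx y hy
          have hdpos : 0 < dist x y := lt_of_lt_of_le hδ0 hdδ
          have hdr : 0 < dist x y ^ r := Real.rpow_pos_of_pos hdpos r
          have hsplit : ‖(v x - v y) / dist x y ^ r‖
              ≤ ‖v x‖ / dist x y ^ r + ‖v y‖ / dist x y ^ r := by
            rw [norm_div, Real.norm_eq_abs (dist x y ^ r), abs_of_pos hdr, ← add_div]
            exact div_le_div_of_nonneg_right (norm_sub_le _ _) hdr.le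
          have h2 : (1 : ℝ) / dist x y ^ r ≤ ε ^ (-r) * (1 + ‖y‖) ^ (-r) := by
            rw [Real.rpow_neg hε0.le, Real.rpow_neg (by positivity), ← mul_inv,
              ← Real.mul_rpow hε0.le (by positivity), one_div]
            exact inv_anti₀ (Real.rpow_pos_of_pos (by positivity) r)
              (Real.rpow_le_rpow (by positivity) hd1 hr0.le)
          have h2' : ‖v x‖ / dist x y ^ r ≤ ‖v x‖ * (ε ^ (-r) * (1 + ‖y‖) ^ (-r)) := by
            calc ‖v x‖ / dist x y ^ r = ‖v x‖ * (1 / dist x y ^ r) := by ring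
              _ ≤ ‖v x‖ * (ε ^ (-r) * (1 + ‖y‖) ^ (-r)) :=
                mul_le_mul_of_nonneg_left h2 (norm_nonneg _)
          have h3 : ‖v y‖ / dist x y ^ r ≤ δ ^ (-r) * Ω'.indicator (fun z => ‖v z‖) y := by
            by_cases hyΩ : y ∈ Ω'
            · rw [indicator_of_mem hyΩ]
              have h4 : (1 : ℝ) / dist x y ^ r ≤ δ ^ (-r) := by
                rw [Real.rpow_neg hδ0.le, one_div]
                exact inv_anti₀ (Real.rpow_pos_of_pos hδ0 r)
                  (Real.rpow_le_rpow hδ0.le hdδ hr0.le)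
              calc ‖v y‖ / dist x y ^ r = ‖v y‖ * (1 / dist x y ^ r) := by ring
                _ ≤ ‖v y‖ * δ ^ (-r) := mul_le_mul_of_nonneg_left h4 (norm_nonneg _)
                _ = δ ^ (-r) * ‖v y‖ := mul_comm _ _
            · rw [indicator_of_notMem hyΩ, hv0 y hyΩ]
              simp [hdr.le]
          calc ‖(v x - v y) / dist x y ^ r‖
              ≤ ‖v x‖ / dist x y ^ r + ‖v y‖ / dist x y ^ r := hsplit
            _ ≤ ‖v x‖ * (ε ^ (-r) * (1 + ‖y‖) ^ (-r))
                + δ ^ (-r) * Ω'.indicator (fun z => ‖v z‖) y := add_le_add h2' h3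
        have hintRHS : Integrable (fun y => ‖v x‖ * (ε ^ (-r) * (1 + ‖y‖) ^ (-r))
            + δ ^ (-r) * Ω'.indicator (fun z => ‖v z‖) y) ν := by
          refine Integrable.add ?_ (hvintν.const_mul _)
          have := (hone'.const_mul (ε ^ (-r))).const_mul (‖v x‖)
          simpa [mul_assoc] using this
        refine le_trans (integral_mono_of_nonneg
          (Filter.Eventually.of_forall fun y => norm_nonneg _) hintRHS hmono) ?_
        rw [integral_add ?_ (hvintν.const_mul _)]
        · rw [integral_const_mul, integral_const_mul, integral_const_mul]
          have hindle : ∫ y, Ω'.indicator (fun z => ‖v z‖) y ∂ν ≤ I₀ := by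
            have h5 : ∫ y, Ω'.indicator (fun z => ‖v z‖) y ∂ν
                ≤ ∫ y, Ω'.indicator (fun z => ‖v z‖) y := by
              exact setIntegral_le_integral hvint
                (Filter.Eventually.of_forall fun y => indicator_nonneg
                  (fun z _ => norm_nonneg _) y)
            exact le_trans h5 (le_of_eq (integral_indicator hΩ'm))
          have h6 : δ ^ (-r) * ∫ y, Ω'.indicator (fun z => ‖v z‖) y ∂ν ≤ δ ^ (-r) * I₀ :=
            mul_le_mul_of_nonneg_left hindle (Real.rpow_nonneg hδ0.le _)
          linarith
        · have := (hone'.const_mul (ε ^ (-r))).const_mul (‖v x‖)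
          simpa [mul_assoc] using this
      have hJx : ‖J x‖ = C₀ * η x * ‖∫ y, (v x - v y) / dist x y ^ r ∂ν‖ := by
        rw [hJdef]
        simp only [norm_mul, Real.norm_eq_abs, abs_of_nonneg hη0, hC₀def]
      rw [hJx]
      have hnormint0 : (0 : ℝ) ≤ ‖∫ y, (v x - v y) / dist x y ^ r ∂ν‖ := norm_nonneg _
      calc C₀ * η x * ‖∫ y, (v x - v y) / dist x y ^ r ∂ν‖
          ≤ C₀ * 1 * (‖v x‖ * (ε ^ (-r) * A₁) + δ ^ (-r) * I₀) := by
            apply mul_le_mul (by nlinarith) key hnormint0 (by positivity)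
        _ = M₁ * ‖v x‖ + M₂ := by rw [hM₁def, hM₂def]; ring
        _ = g x := by rw [hgdef]; simp [indicator_of_mem hx]
    · have hηx : η x = 0 := image_eq_zero_of_notMem_tsupport hx
      have hJx : J x = 0 := by rw [hJdef]; simp [hηx]
      rw [hJx, norm_zero, hgdef]
      simp only [indicator_of_notMem hx, add_zero]
      positivity
  -- MemLp
  have hKm : MeasurableSet K := hKcl.measurableSet
  have hKvol : volume K < ⊤ := hKcomp.measure_lt_top
  have hg1 : MemLp (fun x => M₁ * ‖v x‖) q volume := ((huLp.ae_eq huv).norm).const_mul M₁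
  have hg2 : MemLp (K.indicator (fun _ => M₂)) q volume :=
    memLp_indicator_const q hKm M₂ (Or.inr hKvol.ne)
  have hgmem : MemLp g q volume := hg1.add hg2
  have hJmem : MemLp J q volume := by
    refine hgmem.of_le hJm ?_
    refine Filter.Eventually.of_forall fun x => (hbound x).trans (le_abs_self _)
  have hImem : MemLp (Itwo N s ω₁ u η) q volume := hJmem.ae_eq hIJ.symm
  refine ⟨hImem, ?_⟩
  -- norm estimates
  have hrestrict : volume.restrict Ω = volume.restrict Ω' :=
    (Measure.restrict_toMeasurable hΩb.measure_lt_top.ne).symm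
  set T := eLpNorm u q (volume.restrict Ω) with hTdef
  have hTv : eLpNorm v q volume = T := by
    rw [hTdef, hrestrict, ← eLpNorm_indicator_eq_eLpNorm_restrict hΩ'm]
    refine eLpNorm_congr_ae ?_
    filter_upwards [huv] with x hx
    by_cases hxΩ : x ∈ Ω'
    · rw [indicator_of_mem hxΩ, ← hx]
    · rw [indicator_of_notMem hxΩ, hv0 x hxΩ]
  have hs1' : eLpNorm (fun x => M₁ * ‖v x‖) q volume = ENNReal.ofReal M₁ * T := by
    have : (fun x => M₁ * ‖v x‖) = M₁ • (fun x => ‖v x‖) := by funext x; simp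
    rw [this, eLpNorm_const_smul, eLpNorm_norm, hTv, ← Real.enorm_eq_ofReal hM₁0]
  have hs2' : eLpNorm (K.indicator (fun _ => M₂)) q volume
      = ENNReal.ofReal M₂ * (volume K) ^ (1 / p) := by
    rw [eLpNorm_indicator_const hKm hq0 hqt, ← Real.enorm_eq_ofReal hM₂0, hqtoReal]
  -- Hölder for I₀
  have hI₀eq : ENNReal.ofReal I₀ = eLpNorm v 1 (volume.restrict Ω') := by
    rw [eLpNorm_one_eq_lintegral_enorm, hI₀def]
    exact ofReal_integral_norm_eq_lintegral_enorm hvΩ'int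
  have hvq : eLpNorm v q (volume.restrict Ω') = T := by
    rw [hTdef, hrestrict]
    exact eLpNorm_congr_ae (ae_restrict_of_ae huv.symm)
  set W := (volume Ω') ^ (1 - 1 / p) with hWdef
  have hHolder : ENNReal.ofReal I₀ ≤ T * W := by
    rw [hI₀eq, hWdef]
    have h := eLpNorm_le_eLpNorm_mul_rpow_measure_univ (μ := volume.restrict Ω')
      (f := v) hq1 hvm.aestronglyMeasurable
    simpa [Measure.restrict_apply_univ, hqtoReal, hvq] using h
  set V := (volume K) ^ (1 / p) with hVdef
  have hWfin : W ≠ ⊤ := (ENNReal.rpow_lt_top_of_nonneg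
    (by rw [sub_nonneg]; rw [div_le_one (by linarith)]; linarith) hΩvol.ne).ne
  have hVfin : V ≠ ⊤ := (ENNReal.rpow_lt_top_of_nonneg (by positivity) hKvol.ne).ne
  have hM₂le : ENNReal.ofReal M₂ ≤ ENNReal.ofReal (C₀ * δ ^ (-r)) * (T * W) := by
    have : M₂ = (C₀ * δ ^ (-r)) * I₀ := by rw [hM₂def]; ring
    rw [this, ENNReal.ofReal_mul (by positivity)]
    exact mul_le_mul_right hHolder _
  set D := ENNReal.ofReal M₁ + ENNReal.ofReal (C₀ * δ ^ (-r)) * W * V with hDdef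
  have hchain : eLpNorm (Itwo N s ω₁ u η) q volume ≤ D * T := by
    calc eLpNorm (Itwo N s ω₁ u η) q volume = eLpNorm J q volume := eLpNorm_congr_ae hIJ
      _ ≤ eLpNorm g q volume :=
        eLpNorm_mono fun x => (hbound x).trans (le_abs_self _)
      _ ≤ eLpNorm (fun x => M₁ * ‖v x‖) q volume
          + eLpNorm (K.indicator (fun _ => M₂)) q volume :=
        eLpNorm_add_le hg1.1 hg2.1 hq1
      _ = ENNReal.ofReal M₁ * T + ENNReal.ofReal M₂ * V := by rw [hs1', hs2']
      _ ≤ ENNReal.ofReal M₁ * T + ENNReal.ofReal (C₀ * δ ^ (-r)) * (T * W) * V := by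
        exact add_le_add_right (mul_le_mul_left hM₂le V) _
      _ = D * T := by rw [hDdef]; ring
  have hDfin : D ≠ ⊤ := by
    rw [hDdef]
    exact ENNReal.add_ne_top.mpr ⟨ENNReal.ofReal_ne_top,
      ENNReal.mul_ne_top (ENNReal.mul_ne_top ENNReal.ofReal_ne_top hWfin) hVfin⟩
  refine ⟨D.toReal + 1, by positivity, ?_⟩
  have hDle : D ≤ ENNReal.ofReal (D.toReal + 1) := by
    rw [ENNReal.ofReal_add ENNReal.toReal_nonneg zero_le_one,
      ENNReal.ofReal_toReal hDfin]
    exact le_add_of_nonneg_right (by simp)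
  exact hchain.trans (mul_le_mul_left hDle T)
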